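/- arXiv:2208.02184 — 3 statements merged into one kernel-verified Lean document; each statement's English description precedes it below -/
import Mathlib

section
/- For a transient simple random walk on Z^d, d ≥ 3, and finite lists Z_1 = {x_1,...,x_{j_1}} and Z_2 = {x_{j_1+1},...,x_{j_1+j_2}} of points (not necessarily distinct), one has Cap(Z_1 ∪ Z_2) ≤ Cap(Z_2) + (j_1 + j_2) / min_{x ∈ Z_1 \ Z_2} { ∑_{i=1}^{j_1+j_2} G(x_i, x) }. -/
open MeasureTheory ProbabilityTheory Finset

noncomputable section

/-- The `d`-dimensional integer lattice. -/
abbrev Zd (d : ℕ) := Fin d → ℤ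

/-- The `2d` unit steps of the simple random walk on `ℤ^d`. -/
def srwSteps (d : ℕ) : Finset (Zd d) :=
  Finset.univ.image (fun p : Fin d × Bool =>
    fun j => if j = p.1 then (if p.2 then 1 else -1) else 0)

/-- The uniform step distribution of the simple random walk on `ℤ^d`. -/
def stepMeasure (d : ℕ) : Measure (Zd d) :=
  ((srwSteps d).card : ENNReal)⁻¹ • ∑ x ∈ srwSteps d, Measure.dirac x

/-- `X` is the i.i.d. sequence of increments of a simple random walk on `ℤ^d`
under the probability measure `P`. -/
structure IsSRW (d : ℕ) {Ω : Type} [MeasurableSpace Ω] (P : Measure Ω)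
    (X : ℕ → Ω → Zd d) : Prop where
  prob : IsProbabilityMeasure P
  meas : ∀ n, Measurable (X n)
  indep : iIndepFun X P
  ident : ∀ n, P.map (X n) = stepMeasure d

/-- Position of the walk at time `n` (started at the origin). -/
def walk {d : ℕ} {Ω : Type} (X : ℕ → Ω → Zd d) (n : ℕ) (ω : Ω) : Zd d :=
  ∑ i ∈ Finset.range n, X i ω

/-- Green's function `G(x,y) = ∑_{n ≥ 0} P^x(S_n = y)` of the walk. -/
def green {d : ℕ} {Ω : Type} [MeasurableSpace Ω] (P : Measure Ω)
    (X : ℕ → Ω → Zd d) (x y : Zd d) : ℝ :=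
  ∑' n : ℕ, (P {ω | x + walk X n ω = y}).toReal

/-- The event that the walk started at `x` never hits `A` at a positive time,
i.e. `τ_A = ∞`. -/
def avoids {d : ℕ} {Ω : Type} (X : ℕ → Ω → Zd d) (x : Zd d)
    (A : Finset (Zd d)) (ω : Ω) : Prop :=
  ∀ n, 1 ≤ n → x + walk X n ω ∉ A

/-- The (Newtonian) capacity `Cap(A) = ∑_{x ∈ A} P^x(τ_A = ∞)`. -/
def cap {d : ℕ} {Ω : Type} [MeasurableSpace Ω] (P : Measure Ω)
    (X : ℕ → Ω → Zd d) (A : Finset (Zd d)) : ℝ :=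
  ∑ x ∈ A, (P {ω | avoids X x A ω}).toReal

/-!
Last-exit decomposition: for a starting point `y` and a finite set `A`, the events "the walk
from `y` is at `z ∈ A` at time `n` and never visits `A` afterwards" are pairwise disjoint, and by
the Markov property at time `n` the event has probability `P^y(S_n = z) P^z(τ_A = ∞)`. Summing
over `n` and `z` gives `∑_{z ∈ A} G(y, z) P^z(τ_A = ∞) ≤ 1`. Adding these bounds for
`y = x_1, …, x_{j₁+j₂}` and keeping only `z ∈ Z₁ \ Z₂` bounds the escape probabilities from
`Z₁ \ Z₂` by `(j₁ + j₂) / min`, while escape probabilities from `Z₂` only increase when the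
target shrinks to `Z₂`.

If the minimum vanishes then `G(x, x) = 0` for some `x`, although its first term is `1`: the
series diverges, the walk is recurrent and all escape probabilities vanish.
-/

open scoped ENNReal

section

variable {d : ℕ} {Ω : Type} [MeasurableSpace Ω] {P : Measure Ω} {X : ℕ → Ω → Zd d}

def shift (X : ℕ → Ω → Zd d) (n : ℕ) : ℕ → Ω → Zd d := fun k => X (n + k)

-- `green P X x y` is the `toReal` of this, so it is `0` when the walk is recurrent.
def expectedVisits (P : Measure Ω) (X : ℕ → Ω → Zd d) (x y : Zd d) : ℝ≥0∞ :=
  ∑' n, P {ω | x + walk X n ω = y}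

def escapeProb (P : Measure Ω) (X : ℕ → Ω → Zd d) (A : Finset (Zd d)) (z : Zd d) : ℝ≥0∞ :=
  P {ω | avoids X z A ω}

def lastVisit (X : ℕ → Ω → Zd d) (x : Zd d) (A : Finset (Zd d)) (n : ℕ) (z : Zd d) : Set Ω :=
  {ω | x + walk X n ω = z} ∩ {ω | avoids (shift X n) z A ω}

omit [MeasurableSpace Ω] in
lemma walk_add (n m : ℕ) (ω : Ω) : walk X (n + m) ω = walk X n ω + walk (shift X n) m ω :=
  Finset.sum_range_add (fun i => X i ω) n m

lemma isSRW_shift (hX : IsSRW d P X) (n : ℕ) : IsSRW d P (shift X n) where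
  prob := hX.prob
  meas k := hX.meas (n + k)
  indep := hX.indep.precomp (g := (n + ·)) (add_right_injective n)
  ident k := hX.ident (n + k)

lemma IsSRW.map_increments_eq_infinitePi (hX : IsSRW d P X) :
    P.map (fun ω k => X k ω) = Measure.infinitePi (fun _ => stepMeasure d) := by
  rw [hX.indep.map_fun_eq_infinitePi_map hX.meas]
  simp only [hX.ident]

omit [MeasurableSpace Ω] in
lemma measurable_walk {m : MeasurableSpace Ω} {Y : ℕ → Ω → Zd d} {n : ℕ}
    (hY : ∀ i < n, Measurable[m] (Y i)) : Measurable[m] (walk Y n) :=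
  Finset.measurable_fun_sum (range n) fun i hi => hY i (mem_range.1 hi)

omit [MeasurableSpace Ω] in
lemma measurableSet_avoids {m : MeasurableSpace Ω} {Y : ℕ → Ω → Zd d}
    (hY : ∀ k, Measurable[m] (Y k)) (z : Zd d) (A : Finset (Zd d)) :
    MeasurableSet {ω | avoids Y z A ω} := by
  simp only [avoids, Set.ofPred_forall]
  exact .iInter fun n => .iInter fun _ =>
    ((measurable_walk fun i _ => hY i).const_add z)
      (MeasurableSet.of_discrete (s := {y : Zd d | y ∉ A}))

lemma IsSRW.escapeProb_eq (hX : IsSRW d P X) {Ω' : Type} [MeasurableSpace Ω'] {Q : Measure Ω'}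
    {Y : ℕ → Ω' → Zd d} (hY : IsSRW d Q Y) (A : Finset (Zd d)) (z : Zd d) :
    escapeProb P X A z = escapeProb Q Y A z := by
  set S := {v : ℕ → Zd d | avoids (fun k v => v k) z A v}
  have hS : MeasurableSet S := measurableSet_avoids (fun k => measurable_pi_apply k) z A
  calc escapeProb P X A z = P.map (fun ω k => X k ω) S :=
        (Measure.map_apply (measurable_pi_lambda _ hX.meas) hS).symm
    _ = Q.map (fun ω k => Y k ω) S := by
        rw [hX.map_increments_eq_infinitePi, hY.map_increments_eq_infinitePi]
    _ = escapeProb Q Y A z := Measure.map_apply (measurable_pi_lambda _ hY.meas) hS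

lemma IsSRW.indep_past_future (hX : IsSRW d P X) (n : ℕ) :
    Indep (⨆ i ∈ Set.Iio n, MeasurableSpace.comap (X i) inferInstance)
      (⨆ i ∈ Set.Ici n, MeasurableSpace.comap (X i) inferInstance) P :=
  indep_iSup_of_disjoint (fun i => (hX.meas i).comap_le)
    ((iIndepFun_iff_iIndep _ _ _).1 hX.indep) (Set.Iio_disjoint_Ici le_rfl)

lemma IsSRW.measure_lastVisit (hX : IsSRW d P X) (x : Zd d) (A : Finset (Zd d)) (n : ℕ)
    (z : Zd d) :
    P (lastVisit X x A n z) = P {ω | x + walk X n ω = z} * escapeProb P X A z := by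
  have hpast : MeasurableSet[⨆ i ∈ Set.Iio n, MeasurableSpace.comap (X i) inferInstance]
      {ω | x + walk X n ω = z} :=
    ((measurable_walk fun i hi => (comap_measurable (X i)).mono
      (le_iSup₂ (f := fun j (_ : j ∈ Set.Iio n) => MeasurableSpace.comap (X j) inferInstance)
        i hi) le_rfl).const_add x) (measurableSet_singleton z)
  have hfuture : MeasurableSet[⨆ i ∈ Set.Ici n, MeasurableSpace.comap (X i) inferInstance]
      {ω | avoids (shift X n) z A ω} :=
    measurableSet_avoids (fun k => (comap_measurable (X (n + k))).mono
      (le_iSup₂ (f := fun j (_ : j ∈ Set.Ici n) => MeasurableSpace.comap (X j) inferInstance)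
        (n + k) (Nat.le_add_right n k)) le_rfl) z A
  rw [lastVisit, (Indep_iff _ _ _).1 (hX.indep_past_future n) _ _ hpast hfuture]
  exact congrArg _ ((isSRW_shift hX n).escapeProb_eq hX A z)

lemma green_nonneg (x y : Zd d) : 0 ≤ green P X x y :=
  tsum_nonneg fun _ => ENNReal.toReal_nonneg

lemma green_eq_toReal_expectedVisits [IsFiniteMeasure P] (x y : Zd d) :
    green P X x y = (expectedVisits P X x y).toReal := by
  rw [green, expectedVisits, ENNReal.tsum_toReal_eq fun n => measure_ne_top P _]

omit [MeasurableSpace Ω] in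
lemma notMem_lastVisit_of_lt {x : Zd d} {A : Finset (Zd d)} {n n' : ℕ} {z z' : Zd d}
    (hn : n < n') (hz' : z' ∈ A) {ω : Ω} (hω : ω ∈ lastVisit X x A n z) :
    ω ∉ lastVisit X x A n' z' := by
  rintro ⟨hω' : x + walk X n' ω = z', -⟩
  obtain ⟨hωz : x + walk X n ω = z, havoids⟩ := hω
  apply havoids (n' - n) (by omega)
  rwa [← hωz, add_assoc, ← walk_add, Nat.add_sub_cancel' hn.le, hω']

omit [MeasurableSpace Ω] in
lemma pairwise_disjoint_lastVisit (x : Zd d) (A : Finset (Zd d)) :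
    Pairwise (Function.onFun Disjoint fun p : A × ℕ => lastVisit X x A p.2 p.1) := by
  rintro ⟨z, n⟩ ⟨z', n'⟩ hne
  refine Set.disjoint_left.2 fun ω hω hω' => ?_
  rcases lt_trichotomy n n' with h | rfl | h
  · exact notMem_lastVisit_of_lt h z'.2 hω hω'
  · exact hne (Prod.ext (Subtype.ext (hω.1.symm.trans hω'.1)) rfl)
  · exact notMem_lastVisit_of_lt h z.2 hω' hω

lemma IsSRW.measurableSet_lastVisit (hX : IsSRW d P X) (x : Zd d) (A : Finset (Zd d)) (n : ℕ)
    (z : Zd d) : MeasurableSet (lastVisit X x A n z) :=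
  (((measurable_walk fun i _ => hX.meas i).const_add x) (measurableSet_singleton z)).inter
    (measurableSet_avoids (isSRW_shift hX n).meas z A)

lemma IsSRW.sum_expectedVisits_mul_escapeProb_le_one (hX : IsSRW d P X) (x : Zd d)
    (A : Finset (Zd d)) : ∑ z ∈ A, expectedVisits P X x z * escapeProb P X A z ≤ 1 := by
  have := hX.prob
  calc ∑ z ∈ A, expectedVisits P X x z * escapeProb P X A z
      = ∑ z ∈ A, ∑' n, P (lastVisit X x A n z) := by
        simp only [expectedVisits, ← ENNReal.tsum_mul_right, hX.measure_lastVisit]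
    _ = ∑' p : A × ℕ, P (lastVisit X x A p.2 p.1) := by
        rw [ENNReal.tsum_prod', Finset.tsum_subtype A fun z => ∑' n, P (lastVisit X x A n z)]
    _ = P (⋃ p : A × ℕ, lastVisit X x A p.2 p.1) :=
        (measure_iUnion (pairwise_disjoint_lastVisit x A)
          fun p => hX.measurableSet_lastVisit x A p.2 p.1).symm
    _ ≤ 1 := prob_le_one

lemma IsSRW.expectedVisits_mul_escapeProb_le_one (hX : IsSRW d P X) (x : Zd d)
    {A : Finset (Zd d)} {z : Zd d} (hz : z ∈ A) :
    expectedVisits P X x z * escapeProb P X A z ≤ 1 :=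
  (single_le_sum (f := fun z => expectedVisits P X x z * escapeProb P X A z)
    (fun _ _ => zero_le) hz).trans (hX.sum_expectedVisits_mul_escapeProb_le_one x A)

lemma IsSRW.escapeProb_eq_zero_of_expectedVisits_eq_top (hX : IsSRW d P X) {x : Zd d}
    {A : Finset (Zd d)} {z : Zd d} (hz : z ∈ A) (h : expectedVisits P X x z = ∞) :
    escapeProb P X A z = 0 := by
  by_contra hne
  simpa [h, ENNReal.top_mul hne] using hX.expectedVisits_mul_escapeProb_le_one x hz

lemma expectedVisits_self (x : Zd d) : expectedVisits P X x x = expectedVisits P X 0 0 := by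
  simp [expectedVisits]

lemma IsSRW.one_le_expectedVisits_self (hX : IsSRW d P X) (x : Zd d) :
    1 ≤ expectedVisits P X x x := by
  have := hX.prob
  calc 1 = P {ω | x + walk X 0 ω = x} := by simp [walk]
    _ ≤ expectedVisits P X x x := ENNReal.le_tsum 0

lemma IsSRW.expectedVisits_self_eq_top (hX : IsSRW d P X) {y : Zd d} (hy : green P X y y = 0)
    (z : Zd d) : expectedVisits P X z z = ∞ := by
  have := hX.prob
  rw [green_eq_toReal_expectedVisits, ENNReal.toReal_eq_zero_iff] at hy
  rw [expectedVisits_self, ← expectedVisits_self y]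
  exact hy.resolve_left (one_pos.trans_le (hX.one_le_expectedVisits_self y)).ne'

lemma IsSRW.toReal_sum_expectedVisits_mul_escapeProb (hX : IsSRW d P X) {ι : Type*}
    (s : Finset ι) (x : ι → Zd d) {A : Finset (Zd d)} {z : Zd d} (hz : z ∈ A) :
    ((∑ i ∈ s, expectedVisits P X (x i) z) * escapeProb P X A z).toReal =
      (∑ i ∈ s, green P X (x i) z) * (escapeProb P X A z).toReal := by
  have := hX.prob
  by_cases he : escapeProb P X A z = 0
  · simp [he]
  have hfin : ∀ i ∈ s, expectedVisits P X (x i) z ≠ ∞ := fun i _ h =>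
    he (hX.escapeProb_eq_zero_of_expectedVisits_eq_top hz h)
  simp only [ENNReal.toReal_mul, ENNReal.toReal_sum hfin, green_eq_toReal_expectedVisits]

lemma IsSRW.sum_sum_expectedVisits_mul_escapeProb_le_card (hX : IsSRW d P X) {ι : Type*}
    [Fintype ι] (x : ι → Zd d) (A : Finset (Zd d)) :
    ∑ z ∈ A, (∑ i, expectedVisits P X (x i) z) * escapeProb P X A z ≤ Fintype.card ι :=
  calc ∑ z ∈ A, (∑ i, expectedVisits P X (x i) z) * escapeProb P X A z
      = ∑ i, ∑ z ∈ A, expectedVisits P X (x i) z * escapeProb P X A z := by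
        simp only [sum_mul]; exact sum_comm
    _ ≤ ∑ _i : ι, 1 := sum_le_sum fun i _ => hX.sum_expectedVisits_mul_escapeProb_le_one (x i) A
    _ = Fintype.card ι := by simp

lemma IsSRW.sum_escapeProb_le_div (hX : IsSRW d P X) {ι : Type*} [Fintype ι] (x : ι → Zd d)
    {A S : Finset (Zd d)} (hSA : S ⊆ A) (hS : S.Nonempty) (hSx : ↑S ⊆ Set.range x) :
    ∑ z ∈ S, (escapeProb P X A z).toReal ≤
      Fintype.card ι / S.inf' hS fun z => ∑ i, green P X (x i) z := by
  obtain ⟨z₀, hz₀, hmin⟩ := exists_mem_eq_inf' hS fun z => ∑ i, green P X (x i) z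
  rw [hmin]
  rcases (sum_nonneg fun i _ => green_nonneg (x i) z₀ : 0 ≤ ∑ i, green P X (x i) z₀).eq_or_lt
    with hm | hm
  · obtain ⟨i₀, rfl⟩ := hSx hz₀
    have hgreen : green P X (x i₀) (x i₀) = 0 :=
      (sum_eq_zero_iff_of_nonneg fun i _ => green_nonneg _ _).1 hm.symm i₀ (mem_univ _)
    rw [← hm, div_zero]
    refine (sum_eq_zero fun z hz => ?_).le
    rw [hX.escapeProb_eq_zero_of_expectedVisits_eq_top (hSA hz)
      (hX.expectedVisits_self_eq_top hgreen z), ENNReal.toReal_zero]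
  have hsum : ∑ z ∈ S, (∑ i, expectedVisits P X (x i) z) * escapeProb P X A z ≤ Fintype.card ι :=
    (sum_le_sum_of_subset hSA).trans (hX.sum_sum_expectedVisits_mul_escapeProb_le_card x A)
  rw [le_div_iff₀ hm]
  calc (∑ z ∈ S, (escapeProb P X A z).toReal) * ∑ i, green P X (x i) z₀
      = ∑ z ∈ S, (∑ i, green P X (x i) z₀) * (escapeProb P X A z).toReal := by
        rw [sum_mul]; simp only [mul_comm]
    _ ≤ ∑ z ∈ S, (∑ i, green P X (x i) z) * (escapeProb P X A z).toReal :=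
        sum_le_sum fun z hz =>
          mul_le_mul_of_nonneg_right (hmin.symm.trans_le (inf'_le _ hz)) ENNReal.toReal_nonneg
    _ = ∑ z ∈ S, ((∑ i, expectedVisits P X (x i) z) * escapeProb P X A z).toReal :=
        sum_congr rfl fun z hz => (hX.toReal_sum_expectedVisits_mul_escapeProb _ x (hSA hz)).symm
    _ = (∑ z ∈ S, (∑ i, expectedVisits P X (x i) z) * escapeProb P X A z).toReal :=
        (ENNReal.toReal_sum fun z hz =>
          (ENNReal.sum_lt_top.1 (hsum.trans_lt (ENNReal.natCast_lt_top _)) z hz).ne).symm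
    _ ≤ Fintype.card ι := ENNReal.toReal_le_of_le_ofReal (by positivity) (by simpa using hsum)

lemma escapeProb_anti (z : Zd d) {A B : Finset (Zd d)} (hAB : A ⊆ B) :
    escapeProb P X B z ≤ escapeProb P X A z :=
  measure_mono fun _ hω n hn hmem => hω n hn (hAB hmem)

lemma cap_union_le [IsFiniteMeasure P] (B C : Finset (Zd d)) :
    cap P X (B ∪ C) ≤ cap P X C + ∑ z ∈ B \ C, (escapeProb P X (B ∪ C) z).toReal := by
  calc cap P X (B ∪ C)
      = ∑ z ∈ C, (escapeProb P X (B ∪ C) z).toReal +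
          ∑ z ∈ B \ C, (escapeProb P X (B ∪ C) z).toReal := by
        rw [← sum_union disjoint_sdiff, union_sdiff_self_eq_union, union_comm C B]; rfl
    _ ≤ _ := by
        gcongr
        exact sum_le_sum fun z _ =>
          ENNReal.toReal_mono (measure_ne_top P _) (escapeProb_anti z subset_union_right)

end

theorem capacity_union_green_bound_general {d : ℕ} {Ω : Type} [MeasurableSpace Ω]
    (P : Measure Ω) (X : ℕ → Ω → Zd d) (hX : IsSRW d P X)
    (j₁ j₂ : ℕ) (x : Fin (j₁ + j₂) → Zd d) (Z₁ Z₂ : Finset (Zd d))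
    (hZ₁ : Z₁ = (Finset.univ.filter fun i : Fin (j₁ + j₂) => (i : ℕ) < j₁).image x)
    (hne : (Z₁ \ Z₂).Nonempty) :
    cap P X (Z₁ ∪ Z₂) ≤ cap P X Z₂ +
      ((j₁ : ℝ) + j₂) / ((Z₁ \ Z₂).inf' hne fun z => ∑ i, green P X (x i) z) := by
  have := hX.prob
  have hZ₁x : ↑(Z₁ \ Z₂) ⊆ Set.range x := fun z hz => by
    obtain ⟨i, -, rfl⟩ := mem_image.1 (hZ₁ ▸ (mem_sdiff.1 hz).1)
    exact Set.mem_range_self i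
  calc cap P X (Z₁ ∪ Z₂)
      ≤ cap P X Z₂ + ∑ z ∈ Z₁ \ Z₂, (escapeProb P X (Z₁ ∪ Z₂) z).toReal := cap_union_le Z₁ Z₂
    _ ≤ _ := by
        gcongr
        simpa using hX.sum_escapeProb_le_div x (sdiff_subset.trans subset_union_left) hne hZ₁x

/-- Lemma 2.3 (mat2): for lists `Z₁ = {x_1,…,x_{j₁}}`, `Z₂ = {x_{j₁+1},…,x_{j₁+j₂}}`
of points (not necessarily distinct) in `ℤ^d`, `d ≥ 3`,
`Cap(Z₁ ∪ Z₂) ≤ Cap(Z₂) + (j₁+j₂)/min_{x ∈ Z₁ \ Z₂} ∑_i G(x_i, x)`. -/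
theorem capacity_union_green_bound {d : ℕ} (hd : 3 ≤ d) {Ω : Type} [MeasurableSpace Ω]
    (P : Measure Ω) (X : ℕ → Ω → Zd d) (hX : IsSRW d P X)
    (j₁ j₂ : ℕ) (x : Fin (j₁ + j₂) → Zd d) (Z₁ Z₂ : Finset (Zd d))
    (hZ₁ : Z₁ = (Finset.univ.filter fun i : Fin (j₁ + j₂) => (i : ℕ) < j₁).image x)
    (hZ₂ : Z₂ = (Finset.univ.filter fun i : Fin (j₁ + j₂) => j₁ ≤ (i : ℕ)).image x)
    (hne : (Z₁ \ Z₂).Nonempty) :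
    cap P X (Z₁ ∪ Z₂) ≤ cap P X Z₂ +
      ((j₁ : ℝ) + j₂) / ((Z₁ \ Z₂).inf' hne fun z => ∑ i, green P X (x i) z) :=
  capacity_union_green_bound_general P X hX j₁ j₂ x Z₁ Z₂ hZ₁ hne
end
end

section
/- For a standard 4-dimensional Brownian motion (β_t), there is a constant C < ∞ such that for all t > 0 and x, y ∈ R^4: E[|β_t − x|^{-1} |β_t − y|^{-1}] ≤ C t^{-1/2} (|x| ∨ |y|)^{-1} ≤ 2C t^{-1/2} |y − x|^{-1}. -/
open MeasureTheory ProbabilityTheory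
open scoped NNReal ENNReal

noncomputable section

/-- Euclidean norm on `Fin d → ℝ`. -/
def nrm {d : ℕ} (x : Fin d → ℝ) : ℝ := Real.sqrt (∑ i, (x i) ^ 2)

/-- The law of a standard `d`-dimensional Brownian motion at time `t`:
`d` independent centered Gaussians of variance `t`. -/
def gaussPi (d : ℕ) (t : ℝ≥0) : Measure (Fin d → ℝ) :=
  Measure.pi fun _ => gaussianReal 0 t

/-!
Subordination: `r⁻¹ = ∫₀^∞ e^{-s r} ds`, applied to `r = |z - x|²`, reduces `E|β_t - x|⁻²` to an
integral over `s` of the explicit Gaussian transform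
`E e^{-s|β_t - x|²} = e^{-s|x|²/(1+2st)} (1+2st)^{-d/2}`. For `d = 4` the substitution
`u = s/(1+2st)` turns this into `∫₀^{1/(2t)} e^{-u|x|²} du`, which is at most both `1/(2t)` and
`|x|⁻²` (for `d > 4` the integrand only gets smaller). The cross moment is then split by
`ab ≤ c a² + c⁻¹ b²` with `c = √t/|y|`, giving `E|β_t - x|⁻¹|β_t - y|⁻¹ ≤ 3/(2√t|y|)`; symmetry in
`x, y` gives the bound with `|x| ∨ |y|`, and `|y - x| ≤ 2 (|x| ∨ |y|)` the second inequality.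
-/

open Real Set

section

variable {d : ℕ}

instance (t : ℝ≥0) : IsProbabilityMeasure (gaussPi d t) := by
  unfold gaussPi; infer_instance

lemma nrm_sq (x : Fin d → ℝ) : nrm x ^ 2 = ∑ i, x i ^ 2 :=
  sq_sqrt (Finset.sum_nonneg fun _ _ => sq_nonneg _)

lemma nrm_eq_norm (x : Fin d → ℝ) : nrm x = ‖WithLp.toLp 2 x‖ := by
  simp [nrm, EuclideanSpace.norm_eq]

lemma nrm_sub_le (x y : Fin d → ℝ) : nrm (y - x) ≤ nrm y + nrm x := by
  simpa only [nrm_eq_norm, WithLp.toLp_sub] using norm_sub_le _ _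

lemma nrm_nonneg (x : Fin d → ℝ) : 0 ≤ nrm x := sqrt_nonneg _

@[fun_prop]
lemma measurable_nrm : Measurable (nrm : (Fin d → ℝ) → ℝ) := by
  unfold nrm; fun_prop

lemma ENNReal.mul_le_mul_sq_add_inv_mul_sq (a b : ℝ≥0∞) {c : ℝ≥0∞} (h0 : c ≠ 0) (htop : c ≠ ⊤) :
    a * b ≤ c * a ^ 2 + c⁻¹ * b ^ 2 := by
  rcases le_total (c * a) b with h | h
  · calc a * b ≤ (c⁻¹ * b) * b := by
          gcongr
          rwa [mul_comm, ← div_eq_mul_inv, ENNReal.le_div_iff_mul_le (.inl h0) (.inl htop),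
            mul_comm]
      _ = c⁻¹ * b ^ 2 := by ring
      _ ≤ _ := le_add_self
  · calc a * b ≤ a * (c * a) := by gcongr
      _ = c * a ^ 2 := by ring
      _ ≤ _ := le_self_add

-- At `r = 0` both sides are `∞`, so the identity can be used for `r = |z - x|²` without
-- discarding the null set `z = x`.
lemma lintegral_Ioi_exp_neg_mul {r : ℝ} (hr : 0 ≤ r) :
    ∫⁻ s in Ioi 0, ENNReal.ofReal (exp (-(s * r))) = (ENNReal.ofReal r)⁻¹ := by
  rcases hr.eq_or_lt with rfl | hr
  · simp
  have h := integral_exp_mul_Ioi (neg_lt_zero.2 hr) 0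
  rw [mul_zero, exp_zero, neg_div_neg_eq] at h
  simp_rw [show ∀ s, -(s * r) = -r * s from fun s => by ring]
  rw [← ofReal_integral_eq_lintegral_ofReal (exp_neg_integrableOn_Ioi 0 hr)
    (Filter.Eventually.of_forall fun _ => (exp_pos _).le), h, one_div, ENNReal.ofReal_inv_of_pos hr]

lemma gaussianPDFReal_mul_exp_neg_mul_sq_sub {t : ℝ≥0} (ht : t ≠ 0) {s : ℝ} (hs : 0 ≤ s)
    (a z : ℝ) :
    gaussianPDFReal 0 t z * exp (-(s * (z - a) ^ 2)) =
      (√(2 * π * t))⁻¹ * exp (-(s * a ^ 2 / (1 + 2 * s * t))) *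
        exp (-((1 + 2 * s * t) / (2 * t) * (z - 2 * s * t * a / (1 + 2 * s * t)) ^ 2)) := by
  have ht' : (0 : ℝ) < t := by positivity
  have hq : 0 < 1 + 2 * s * t := by positivity
  simp only [gaussianPDFReal, mul_assoc, ← exp_add]
  congr 2
  field_simp
  ring

lemma lintegral_exp_neg_mul_sq_sub_gaussianReal {t : ℝ≥0} (ht : t ≠ 0) {s : ℝ} (hs : 0 ≤ s)
    (a : ℝ) :
    ∫⁻ z, ENNReal.ofReal (exp (-(s * (z - a) ^ 2))) ∂gaussianReal 0 t =
      ENNReal.ofReal (exp (-(s * a ^ 2 / (1 + 2 * s * t))) / √(1 + 2 * s * t)) := by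
  have ht' : (0 : ℝ) < t := by positivity
  set q : ℝ := 1 + 2 * s * t
  have hq : 0 < q := by positivity
  set b : ℝ := q / (2 * t)
  set c : ℝ := 2 * s * t * a / q
  have hb : 0 < b := by positivity
  have hgauss : ∫ z, exp (-(b * (z - c) ^ 2)) = √(π / b) := by
    rw [← integral_gaussian b, ← integral_sub_right_eq_self (fun z => exp (-b * z ^ 2)) c]
    simp only [neg_mul]
  have hint : Integrable fun z => exp (-(b * (z - c) ^ 2)) := by
    simpa only [neg_mul] using (integrable_exp_neg_mul_sq hb).comp_sub_right c
  rw [gaussianReal_of_var_ne_zero 0 ht, lintegral_withDensity_eq_lintegral_mul _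
    (measurable_gaussianPDF 0 t) (by fun_prop)]
  simp only [Pi.mul_apply, gaussianPDF, ← ENNReal.ofReal_mul (gaussianPDFReal_nonneg 0 t _),
    gaussianPDFReal_mul_exp_neg_mul_sq_sub ht hs]
  rw [← ofReal_integral_eq_lintegral_ofReal (hint.const_mul _)
    (.of_forall fun _ => by positivity), integral_const_mul, hgauss]
  congr 1
  rw [mul_comm (√(2 * π * t))⁻¹, mul_assoc, div_eq_mul_inv]
  congr 1
  rw [← sqrt_inv, ← sqrt_inv, ← sqrt_mul (by positivity)]
  simp only [b]
  field_simp

lemma lintegral_pi_prod_eq_prod {ι : Type*} [Fintype ι] {X : ι → Type*}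
    [∀ i, MeasurableSpace (X i)] (μ : ∀ i, Measure (X i)) [∀ i, IsProbabilityMeasure (μ i)]
    (f : ∀ i, X i → ℝ≥0∞) (hf : ∀ i, Measurable (f i)) :
    ∫⁻ z, ∏ i, f i (z i) ∂Measure.pi μ = ∏ i, ∫⁻ x, f i x ∂μ i := by
  refine (lintegral_prod_eq_prod_lintegral_of_indepFun Finset.univ
    (fun i (z : ∀ i, X i) => f i (z i)) (iIndepFun_pi fun i => (hf i).aemeasurable)
    fun i => (hf i).comp (measurable_pi_apply i)).trans ?_
  exact Finset.prod_congr rfl fun i _ => (measurePreserving_eval μ i).lintegral_comp (hf i)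

lemma lintegral_exp_neg_mul_nrm_sq_gaussPi {t : ℝ≥0} (ht : t ≠ 0) {s : ℝ} (hs : 0 ≤ s)
    (x : Fin d → ℝ) :
    ∫⁻ z, ENNReal.ofReal (exp (-(s * nrm (z - x) ^ 2))) ∂gaussPi d t =
      ENNReal.ofReal (exp (-(s * nrm x ^ 2 / (1 + 2 * s * t))) / √(1 + 2 * s * t) ^ d) := by
  have hsplit : ∀ y : Fin d → ℝ, ENNReal.ofReal (exp (-(s * nrm y ^ 2))) =
      ∏ i, ENNReal.ofReal (exp (-(s * y i ^ 2))) := fun y => by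
    rw [← ENNReal.ofReal_prod_of_nonneg fun _ _ => (exp_pos _).le, ← exp_sum, nrm_sq,
      Finset.mul_sum, Finset.sum_neg_distrib]
  simp_rw [hsplit, Pi.sub_apply]
  rw [gaussPi, lintegral_pi_prod_eq_prod _ (fun i w => ENNReal.ofReal (exp (-(s * (w - x i) ^ 2))))
    fun _ => by fun_prop]
  simp_rw [lintegral_exp_neg_mul_sq_sub_gaussianReal ht hs]
  rw [← ENNReal.ofReal_prod_of_nonneg fun _ _ => by positivity, Finset.prod_div_distrib,
    ← exp_sum, Finset.prod_const, Finset.card_univ, Fintype.card_fin, Finset.sum_neg_distrib,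
    ← Finset.sum_div, ← Finset.mul_sum, nrm_sq]

lemma lintegral_inv_nrm_sq_gaussPi {t : ℝ≥0} (ht : t ≠ 0) (x : Fin d → ℝ) :
    ∫⁻ z, (ENNReal.ofReal (nrm (z - x)))⁻¹ ^ 2 ∂gaussPi d t =
      ∫⁻ s in Ioi 0,
        ENNReal.ofReal (exp (-(s * nrm x ^ 2 / (1 + 2 * s * t))) / √(1 + 2 * s * t) ^ d) := by
  have hsubord : ∀ z : Fin d → ℝ, (ENNReal.ofReal (nrm (z - x)))⁻¹ ^ 2 =
      ∫⁻ s in Ioi 0, ENNReal.ofReal (exp (-(s * nrm (z - x) ^ 2))) := fun z => by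
    rw [lintegral_Ioi_exp_neg_mul (sq_nonneg _), ENNReal.ofReal_pow (nrm_nonneg _),
      ENNReal.inv_pow]
  simp_rw [hsubord]
  rw [lintegral_lintegral_swap (by fun_prop)]
  exact setLIntegral_congr_fun measurableSet_Ioi fun s hs =>
    lintegral_exp_neg_mul_nrm_sq_gaussPi ht (le_of_lt hs) x

lemma lintegral_inv_nrm_sq_gaussPi_le (hd : 4 ≤ d) {t : ℝ≥0} (ht : t ≠ 0) (x : Fin d → ℝ) :
    ∫⁻ z, (ENNReal.ofReal (nrm (z - x)))⁻¹ ^ 2 ∂gaussPi d t ≤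
      ∫⁻ u in Ioo (0 : ℝ) (1 / (2 * t)), ENNReal.ofReal (exp (-(u * nrm x ^ 2))) := by
  have ht' : (0 : ℝ) < t := by positivity
  set φ : ℝ → ℝ := fun s => s / (1 + 2 * s * t)
  have hderiv : ∀ s ∈ Ioi (0 : ℝ), HasDerivWithinAt φ (1 / (1 + 2 * s * t) ^ 2) (Ioi 0) s := by
    intro s hs
    have hq : 1 + 2 * s * t ≠ 0 := by have : (0 : ℝ) < s := hs; positivity
    have h := (hasDerivAt_id' s).div
      ((((hasDerivAt_id' s).const_mul 2).mul_const (t : ℝ)).const_add 1) hq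
    refine (h.congr_deriv ?_).hasDerivWithinAt
    field_simp
    ring
  have hinj : InjOn φ (Ioi 0) := by
    intro s₁ hs₁ s₂ hs₂ h
    have : (0 : ℝ) < s₁ := hs₁
    have : (0 : ℝ) < s₂ := hs₂
    rw [div_eq_div_iff (by positivity) (by positivity)] at h
    linear_combination h
  have himage : φ '' Ioi 0 ⊆ Ioo (0 : ℝ) (1 / (2 * t)) := by
    rintro _ ⟨s, hs, rfl⟩
    have : (0 : ℝ) < s := hs
    constructor
    · positivity
    · rw [div_lt_div_iff₀ (by positivity) (by positivity)]
      linarith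
  calc ∫⁻ z, (ENNReal.ofReal (nrm (z - x)))⁻¹ ^ 2 ∂gaussPi d t
      = ∫⁻ s in Ioi 0,
          ENNReal.ofReal (exp (-(s * nrm x ^ 2 / (1 + 2 * s * t))) / √(1 + 2 * s * t) ^ d) :=
        lintegral_inv_nrm_sq_gaussPi ht x
    _ ≤ ∫⁻ s in Ioi 0, ENNReal.ofReal |1 / (1 + 2 * s * t) ^ 2| *
          ENNReal.ofReal (exp (-(φ s * nrm x ^ 2))) := by
        refine setLIntegral_mono' measurableSet_Ioi fun s hs => ?_
        have hs : (0 : ℝ) ≤ s := le_of_lt hs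
        have hq : 1 ≤ 1 + 2 * s * t := by nlinarith
        have hpow : (1 + 2 * s * t) ^ 2 ≤ √(1 + 2 * s * t) ^ d := by
          calc (1 + 2 * s * t) ^ 2 = √(1 + 2 * s * t) ^ 4 := by
                rw [show 4 = 2 * 2 by rfl, pow_mul, sq_sqrt (by positivity)]
            _ ≤ √(1 + 2 * s * t) ^ d := pow_le_pow_right₀ (one_le_sqrt.2 hq) hd
        rw [abs_of_nonneg (by positivity), ← ENNReal.ofReal_mul (by positivity), one_div_mul_eq_div,
          div_mul_eq_mul_div]
        exact ENNReal.ofReal_le_ofReal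
          (div_le_div_of_nonneg_left (by positivity) (by positivity) hpow)
    _ = ∫⁻ u in φ '' Ioi 0, ENNReal.ofReal (exp (-(u * nrm x ^ 2))) :=
        (lintegral_image_eq_lintegral_abs_deriv_mul measurableSet_Ioi hderiv hinj
          fun u => ENNReal.ofReal (exp (-(u * nrm x ^ 2)))).symm
    _ ≤ ∫⁻ u in Ioo (0 : ℝ) (1 / (2 * t)), ENNReal.ofReal (exp (-(u * nrm x ^ 2))) :=
        lintegral_mono_set himage

lemma lintegral_inv_nrm_sq_gaussPi_le_one_div (hd : 4 ≤ d) {t : ℝ≥0} (ht : t ≠ 0)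
    (x : Fin d → ℝ) :
    ∫⁻ z, (ENNReal.ofReal (nrm (z - x)))⁻¹ ^ 2 ∂gaussPi d t ≤ ENNReal.ofReal (1 / (2 * t)) :=
  calc ∫⁻ z, (ENNReal.ofReal (nrm (z - x)))⁻¹ ^ 2 ∂gaussPi d t
      ≤ ∫⁻ u in Ioo (0 : ℝ) (1 / (2 * t)), ENNReal.ofReal (exp (-(u * nrm x ^ 2))) :=
        lintegral_inv_nrm_sq_gaussPi_le hd ht x
    _ ≤ ∫⁻ _ in Ioo (0 : ℝ) (1 / (2 * t)), 1 :=
        setLIntegral_mono' measurableSet_Ioo fun u hu => ENNReal.ofReal_le_one.2 <|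
          exp_le_one_iff.2 <| neg_nonpos.2 <| mul_nonneg hu.1.le (sq_nonneg _)
    _ = ENNReal.ofReal (1 / (2 * t)) := by rw [setLIntegral_const, one_mul, volume_Ioo, sub_zero]

lemma lintegral_inv_nrm_sq_gaussPi_le_inv_nrm_sq (hd : 4 ≤ d) {t : ℝ≥0} (ht : t ≠ 0)
    (x : Fin d → ℝ) :
    ∫⁻ z, (ENNReal.ofReal (nrm (z - x)))⁻¹ ^ 2 ∂gaussPi d t ≤ (ENNReal.ofReal (nrm x ^ 2))⁻¹ :=
  (lintegral_inv_nrm_sq_gaussPi_le hd ht x).trans <|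
    (lintegral_mono_set Ioo_subset_Ioi_self).trans_eq (lintegral_Ioi_exp_neg_mul (sq_nonneg _))

lemma lintegral_inv_nrm_mul_inv_nrm_gaussPi_le (hd : 4 ≤ d) {t : ℝ≥0} (ht : t ≠ 0)
    (x y : Fin d → ℝ) :
    ∫⁻ z, (ENNReal.ofReal (nrm (z - x)))⁻¹ * (ENNReal.ofReal (nrm (z - y)))⁻¹ ∂gaussPi d t ≤
      2 * (ENNReal.ofReal √t)⁻¹ * (ENNReal.ofReal (nrm y))⁻¹ := by
  rcases (nrm_nonneg y).eq_or_lt with hy | hy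
  · rw [← hy, ENNReal.ofReal_zero, ENNReal.inv_zero, ENNReal.mul_top (by simp)]
    exact le_top
  have hu : 0 < √(t : ℝ) := sqrt_pos.2 (by positivity)
  set c := ENNReal.ofReal (√t / nrm y)
  have hc : c ≠ 0 := (ENNReal.ofReal_pos.2 (by positivity)).ne'
  have hc_inv : c⁻¹ = ENNReal.ofReal (nrm y / √t) := by
    rw [← ENNReal.ofReal_inv_of_pos (by positivity), inv_div]
  calc ∫⁻ z, (ENNReal.ofReal (nrm (z - x)))⁻¹ * (ENNReal.ofReal (nrm (z - y)))⁻¹ ∂gaussPi d t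
      ≤ ∫⁻ z, (c * (ENNReal.ofReal (nrm (z - x)))⁻¹ ^ 2 +
          c⁻¹ * (ENNReal.ofReal (nrm (z - y)))⁻¹ ^ 2) ∂gaussPi d t :=
        lintegral_mono fun z => ENNReal.mul_le_mul_sq_add_inv_mul_sq _ _ hc ENNReal.ofReal_ne_top
    _ = c * ∫⁻ z, (ENNReal.ofReal (nrm (z - x)))⁻¹ ^ 2 ∂gaussPi d t +
          c⁻¹ * ∫⁻ z, (ENNReal.ofReal (nrm (z - y)))⁻¹ ^ 2 ∂gaussPi d t := by
        rw [lintegral_add_left (by fun_prop), lintegral_const_mul _ (by fun_prop),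
          lintegral_const_mul _ (by fun_prop)]
    _ ≤ c * ENNReal.ofReal (1 / (2 * t)) + c⁻¹ * (ENNReal.ofReal (nrm y ^ 2))⁻¹ := by
        gcongr
        exacts [lintegral_inv_nrm_sq_gaussPi_le_one_div hd ht x,
          lintegral_inv_nrm_sq_gaussPi_le_inv_nrm_sq hd ht y]
    _ ≤ 2 * (ENNReal.ofReal √t)⁻¹ * (ENNReal.ofReal (nrm y))⁻¹ := by
        rw [hc_inv, ← ENNReal.ofReal_inv_of_pos (by positivity),
          ← ENNReal.ofReal_mul (by positivity), ← ENNReal.ofReal_mul (by positivity),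
          ← ENNReal.ofReal_add (by positivity) (by positivity),
          ← ENNReal.ofReal_inv_of_pos hu, ← ENNReal.ofReal_inv_of_pos hy,
          ← ENNReal.ofReal_ofNat 2, ← ENNReal.ofReal_mul (by norm_num),
          ← ENNReal.ofReal_mul (by positivity)]
        refine ENNReal.ofReal_le_ofReal ?_
        have ht_sq : (t : ℝ) = √t ^ 2 := (sq_sqrt t.coe_nonneg).symm
        set u := √(t : ℝ)
        rw [ht_sq]
        field_simp
        linarith

lemma inv_ofReal_max_nrm_le (x y : Fin d → ℝ) :
    (ENNReal.ofReal (max (nrm x) (nrm y)))⁻¹ ≤ 2 * (ENNReal.ofReal (nrm (y - x)))⁻¹ :=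
  calc (ENNReal.ofReal (max (nrm x) (nrm y)))⁻¹
      = 2 * (2 * ENNReal.ofReal (max (nrm x) (nrm y)))⁻¹ := by
        rw [ENNReal.mul_inv (by simp) (by simp), ← mul_assoc,
          ENNReal.mul_inv_cancel two_ne_zero ENNReal.ofNat_ne_top, one_mul]
    _ ≤ 2 * (ENNReal.ofReal (nrm (y - x)))⁻¹ := by
        gcongr
        rw [← ENNReal.ofReal_ofNat 2, ← ENNReal.ofReal_mul zero_le_two]
        refine ENNReal.ofReal_le_ofReal ((nrm_sub_le x y).trans ?_)
        linarith [le_max_left (nrm x) (nrm y), le_max_right (nrm x) (nrm y)]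

end

/-- Cross bound (bine2): for standard 4-dimensional Brownian motion,
`E[|β_t − x|⁻¹|β_t − y|⁻¹] ≤ C t^{-1/2} (|x| ∨ |y|)⁻¹ ≤ 2C t^{-1/2} |y − x|⁻¹`. -/
theorem bm4_inverse_cross_moment :
    ∃ C : ℝ≥0∞, 0 < C ∧ C ≠ ⊤ ∧ ∀ (t : ℝ≥0) (x y : Fin 4 → ℝ), 0 < t →
      (∫⁻ z, (ENNReal.ofReal (nrm (z - x)))⁻¹ * (ENNReal.ofReal (nrm (z - y)))⁻¹
          ∂(gaussPi 4 t)) ≤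
          C * (ENNReal.ofReal (Real.sqrt t))⁻¹ * (ENNReal.ofReal (max (nrm x) (nrm y)))⁻¹ ∧
        C * (ENNReal.ofReal (Real.sqrt t))⁻¹ * (ENNReal.ofReal (max (nrm x) (nrm y)))⁻¹ ≤
          2 * C * (ENNReal.ofReal (Real.sqrt t))⁻¹ * (ENNReal.ofReal (nrm (y - x)))⁻¹ := by
  refine ⟨2, two_pos, ENNReal.ofNat_ne_top, fun t x y ht => ⟨?_, ?_⟩⟩
  · rcases max_choice (nrm x) (nrm y) with h | h <;> rw [h]
    · simp_rw [mul_comm (ENNReal.ofReal (nrm (_ - x)))⁻¹]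
      exact lintegral_inv_nrm_mul_inv_nrm_gaussPi_le le_rfl ht.ne' y x
    · exact lintegral_inv_nrm_mul_inv_nrm_gaussPi_le le_rfl ht.ne' x y
  · calc 2 * (ENNReal.ofReal √t)⁻¹ * (ENNReal.ofReal (max (nrm x) (nrm y)))⁻¹
        ≤ 2 * (ENNReal.ofReal √t)⁻¹ * (2 * (ENNReal.ofReal (nrm (y - x)))⁻¹) :=
          mul_le_mul_right (inv_ofReal_max_nrm_le x y) _
      _ = 2 * 2 * (ENNReal.ofReal √t)⁻¹ * (ENNReal.ofReal (nrm (y - x)))⁻¹ := by ring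

end
end

section
/- Fix n ∈ N and define the positive linear operators on bounded functions on [0,1]: (Qf)(x) = ∫_0^{1−x} y^{-1/2} f(x+y) dy and (Q_n f)(x) = ∫_0^{1−x} (y)_n^{-1/2} f((x)_n + (y)_n) dy, where (y)_n := ⌈yn⌉/n. Then for every k ≥ 0, (Q_n^k 1)(x) ≤ (Q^k 1)(x) for all x ∈ [0,1]; in particular the Riemann sums J_{k,n} := n^{-k} ∑_{1 ≤ s_1 < ⋯ < s_k ≤ n} ∏_{i=1}^k (s_i/n − s_{i-1}/n)^{-1/2} (with s_0 = 0) satisfy J_{k,n} ≤ J_k for all k, n ∈ N. -/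
open MeasureTheory

noncomputable section

/-- The density `∏_{i=1}^k (θ_i − θ_{i−1})^{-1/2}` on the simplex, with `θ_0 := 0`. -/
def simplexDensity (k : ℕ) (θ : Fin k → ℝ) : ℝ :=
  ∏ i : Fin k,
    (θ i - if (i : ℕ) = 0 then 0
      else θ ⟨(i : ℕ) - 1, lt_of_le_of_lt (Nat.sub_le _ _) i.isLt⟩) ^ (-(1 : ℝ) / 2)

/-- The iterated simplex integral `J_k`, with `θ_0 = 0`. -/
def Jint (k : ℕ) : ℝ :=
  ∫ θ in {θ : Fin k → ℝ | StrictMono θ ∧ (∀ i, 0 < θ i) ∧ ∀ i, θ i ≤ 1},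
    simplexDensity k θ

/-- The discretization `(y)_n = ⌈yn⌉/n`. -/
def ceilPart (n : ℕ) (y : ℝ) : ℝ := ((⌈y * (n : ℝ)⌉ : ℤ) : ℝ) / n

/-- The positive operator `(Qf)(x) = ∫_0^{1−x} y^{-1/2} f(x+y) dy`. -/
def Qop (f : ℝ → ℝ) (x : ℝ) : ℝ :=
  ∫ y in Set.Ioc (0 : ℝ) (1 - x), y ^ (-(1 : ℝ) / 2) * f (x + y)

/-- The discretized operator `(Q_n f)(x) = ∫_0^{1−x} (y)_n^{-1/2} f((x)_n + (y)_n) dy`. -/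
def Qnop (n : ℕ) (f : ℝ → ℝ) (x : ℝ) : ℝ :=
  ∫ y in Set.Ioc (0 : ℝ) (1 - x),
    (ceilPart n y) ^ (-(1 : ℝ) / 2) * f (ceilPart n x + ceilPart n y)

/-- The Riemann sum
`J_{k,n} = n^{-k} ∑_{1 ≤ s₁ < ⋯ < s_k ≤ n} ∏_{i=1}^k (s_i/n − s_{i−1}/n)^{-1/2}`, `s_0 = 0`. -/
def Jsum (k n : ℕ) : ℝ :=
  ((n : ℝ) ^ k)⁻¹ *
    ∑ s ∈ (Fintype.piFinset fun _ : Fin k => Finset.Icc 1 n).filter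
        (fun s => ∀ i j : Fin k, i < j → s i < s j),
      ∏ i : Fin k,
        ((s i : ℝ) / n - if (i : ℕ) = 0 then 0
          else (s ⟨(i : ℕ) - 1, lt_of_le_of_lt (Nat.sub_le _ _) i.isLt⟩ : ℝ) / n) ^
          (-(1 : ℝ) / 2)

/-!
If `g` is non-increasing, nonnegative and dominates `f ≥ 0`, then `Q_n f ≤ Q g` on `[0, ∞)`:
rounding up, `(y)_n ≥ y`, lowers the kernel `y ^ (-1/2)` and moves the evaluation point to the
right, where `g` is smaller. As `Q` maps non-increasing nonnegative functions to such functions,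
induction gives `Q_n^k 1 ≤ Q^k 1`.

At `x = 0` the two iterates are the quantities of the second claim. Splitting off the first
coordinate of the simplex (Tonelli) gives `J_k = (Q^k 1)(0)`. On a grid point `t/n` the integrand
of `Q_n` is constant on each cell `((i-1)/n, i/n]`, so `Q_n` acts there as a finite sum over later
grid points, and unfolding it `k` times from `0` gives the Riemann sum `J_{k,n}`.
-/

open scoped ENNReal

lemma le_ceilPart {n : ℕ} (hn : 0 < n) (y : ℝ) : y ≤ ceilPart n y := by
  rw [ceilPart, le_div_iff₀ (by exact_mod_cast hn)]
  exact Int.le_ceil _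

lemma integrableOn_rpow_mul_comp_add {f : ℝ → ℝ} (hf : Antitone f) (hf0 : ∀ z, 0 ≤ f z)
    (x T : ℝ) : IntegrableOn (fun y => y ^ (-(1:ℝ)/2) * f (x + y)) (Set.Ioc 0 T) := by
  have hrpow : IntegrableOn (fun y : ℝ => y ^ (-(1:ℝ)/2)) (Set.Ioc 0 T) := by
    rcases le_total T 0 with hT | hT
    · simp [Set.Ioc_eq_empty_of_le hT]
    · simpa [intervalIntegrable_iff_integrableOn_Ioc_of_le hT] using
        intervalIntegral.intervalIntegrable_rpow' (a := 0) (b := T) (r := -(1:ℝ)/2) (by norm_num)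
  refine (hrpow.const_mul (f x)).mono' (by have := hf.measurable; fun_prop) ?_
  refine (ae_restrict_iff' measurableSet_Ioc).2 (.of_forall fun y hy => ?_)
  have hy0 : 0 ≤ y ^ (-(1:ℝ)/2) := Real.rpow_nonneg hy.1.le _
  rw [Real.norm_of_nonneg (mul_nonneg hy0 (hf0 _)), mul_comm (f x)]
  exact mul_le_mul_of_nonneg_left (hf (by linarith [hy.1])) hy0

lemma ae_nonneg_rpow_mul_comp_add {f : ℝ → ℝ} (hf0 : ∀ z, 0 ≤ f z) (x T : ℝ) :
    0 ≤ᵐ[volume.restrict (Set.Ioc 0 T)] fun y => y ^ (-(1:ℝ)/2) * f (x + y) :=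
  (ae_restrict_iff' measurableSet_Ioc).2 (.of_forall fun _ hy =>
    mul_nonneg (Real.rpow_nonneg hy.1.le _) (hf0 _))

lemma Qop_nonneg {f : ℝ → ℝ} (hf0 : ∀ z, 0 ≤ f z) (x : ℝ) : 0 ≤ Qop f x :=
  integral_nonneg_of_ae (ae_nonneg_rpow_mul_comp_add hf0 x _)

lemma Qnop_nonneg {n : ℕ} (hn : 0 < n) {f : ℝ → ℝ} (hf0 : ∀ z, 0 ≤ f z) (x : ℝ) :
    0 ≤ Qnop n f x :=
  setIntegral_nonneg measurableSet_Ioc fun y hy =>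
    mul_nonneg (Real.rpow_nonneg (hy.1.le.trans (le_ceilPart hn y)) _) (hf0 _)

lemma Qop_antitone {f : ℝ → ℝ} (hf : Antitone f) (hf0 : ∀ z, 0 ≤ f z) : Antitone (Qop f) := by
  intro x₁ x₂ hx
  calc Qop f x₂
      ≤ ∫ y in Set.Ioc 0 (1 - x₂), y ^ (-(1:ℝ)/2) * f (x₁ + y) :=
        integral_mono_of_nonneg (ae_nonneg_rpow_mul_comp_add hf0 _ _)
          (integrableOn_rpow_mul_comp_add hf hf0 _ _)
          ((ae_restrict_iff' measurableSet_Ioc).2 (.of_forall fun y hy =>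
            mul_le_mul_of_nonneg_left (hf (by linarith)) (Real.rpow_nonneg hy.1.le _)))
    _ ≤ Qop f x₁ :=
        setIntegral_mono_set (integrableOn_rpow_mul_comp_add hf hf0 _ _)
          (ae_nonneg_rpow_mul_comp_add hf0 _ _)
          (Set.Ioc_subset_Ioc_right (by linarith)).eventuallyLE

lemma Qnop_le_Qop {n : ℕ} (hn : 0 < n) {f g : ℝ → ℝ} (hf0 : ∀ z, 0 ≤ f z) (hg : Antitone g)
    (hg0 : ∀ z, 0 ≤ g z) (hfg : ∀ z, 0 ≤ z → f z ≤ g z) {x : ℝ} (hx : 0 ≤ x) :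
    Qnop n f x ≤ Qop g x := by
  refine integral_mono_of_nonneg ((ae_restrict_iff' measurableSet_Ioc).2 (.of_forall fun y hy =>
    mul_nonneg (Real.rpow_nonneg (hy.1.le.trans (le_ceilPart hn y)) _) (hf0 _)))
    (integrableOn_rpow_mul_comp_add hg hg0 _ _)
    ((ae_restrict_iff' measurableSet_Ioc).2 (.of_forall fun y hy => ?_))
  have hy0 : 0 < y := hy.1
  have hcy : y ≤ ceilPart n y := le_ceilPart hn y
  have hcx : x ≤ ceilPart n x := le_ceilPart hn x
  exact mul_le_mul (Real.rpow_le_rpow_of_nonpos hy0 hcy (by norm_num))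
    ((hfg _ (by linarith)).trans (hg (by linarith))) (hf0 _) (Real.rpow_nonneg hy0.le _)

lemma Qop_iterate_nonneg (k : ℕ) (x : ℝ) : 0 ≤ Qop^[k] (fun _ => 1) x := by
  induction k generalizing x with
  | zero => exact zero_le_one
  | succ k ih => exact Function.iterate_succ_apply' .. ▸ Qop_nonneg ih x

lemma Qop_iterate_antitone (k : ℕ) : Antitone (Qop^[k] (fun _ => 1)) := by
  induction k with
  | zero => exact antitone_const
  | succ k ih => exact Function.iterate_succ' .. ▸ Qop_antitone ih (Qop_iterate_nonneg k)

lemma Qnop_iterate_nonneg {n : ℕ} (hn : 0 < n) (k : ℕ) (x : ℝ) :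
    0 ≤ (Qnop n)^[k] (fun _ => 1) x := by
  induction k generalizing x with
  | zero => exact zero_le_one
  | succ k ih => exact Function.iterate_succ_apply' .. ▸ Qnop_nonneg hn ih x

lemma Qnop_iterate_le_Qop_iterate_of_nonneg {n : ℕ} (hn : 0 < n) (k : ℕ) {x : ℝ} (hx : 0 ≤ x) :
    (Qnop n)^[k] (fun _ => 1) x ≤ Qop^[k] (fun _ => 1) x := by
  induction k generalizing x with
  | zero => exact le_rfl
  | succ k ih =>
    simp only [Function.iterate_succ_apply']
    exact Qnop_le_Qop hn (Qnop_iterate_nonneg hn k) (Qop_iterate_antitone k)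
      (Qop_iterate_nonneg k) (fun _ => ih) hx

def chainsIn {α : Type*} [Preorder α] (k : ℕ) (x b : α) : Set (Fin k → α) :=
  {θ | StrictMono θ ∧ (∀ i, x < θ i) ∧ ∀ i, θ i ≤ b}

lemma cons_mem_chainsIn {α : Type*} [Preorder α] {k : ℕ} {x b t : α} {u : Fin k → α} :
    (Fin.cons t u : Fin (k + 1) → α) ∈ chainsIn (k + 1) x b ↔
      t ∈ Set.Ioc x b ∧ u ∈ chainsIn k t b := by
  simp only [chainsIn, Set.mem_ofPred_eq, Set.mem_Ioc, Fin.strictMono_cons, Fin.forall_fin_succ,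
    Fin.cons_zero, Fin.cons_succ]
  constructor
  · rintro ⟨⟨htu, hu⟩, ⟨hxt, -⟩, htb, hub⟩
    exact ⟨⟨hxt, htb⟩, hu, htu, hub⟩
  · rintro ⟨⟨hxt, htb⟩, hu, htu, hub⟩
    exact ⟨⟨htu, hu⟩, ⟨hxt, fun i => hxt.trans (htu i)⟩, htb, hub⟩

lemma measurableSet_chainsIn (k : ℕ) (x b : ℝ) : MeasurableSet (chainsIn k x b) := by
  simp only [chainsIn, StrictMono, Set.ofPred_and, Set.ofPred_forall]
  measurability

def chainDensity (k : ℕ) (x : ℝ) (θ : Fin k → ℝ) : ℝ :=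
  ∏ i : Fin k, (θ i - (Fin.cons x θ : Fin (k + 1) → ℝ) i.castSucc) ^ (-(1:ℝ)/2)

lemma chainDensity_cons (k : ℕ) (x t : ℝ) (u : Fin k → ℝ) :
    chainDensity (k + 1) x (Fin.cons t u) = (t - x) ^ (-(1:ℝ)/2) * chainDensity k t u := by
  simp [chainDensity, Fin.prod_univ_succ]

lemma cons_castSucc_eq_ite {k : ℕ} (x : ℝ) (θ : Fin k → ℝ) (i : Fin k) :
    (Fin.cons x θ : Fin (k + 1) → ℝ) i.castSucc =
      if (i : ℕ) = 0 then x else θ ⟨(i : ℕ) - 1, lt_of_le_of_lt (Nat.sub_le _ _) i.isLt⟩ := by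
  obtain ⟨_ | j, hj⟩ := i
  · rfl
  · exact Fin.cons_succ (α := fun _ => ℝ) x θ ⟨j, by omega⟩

lemma simplexDensity_eq_chainDensity (k : ℕ) (θ : Fin k → ℝ) :
    simplexDensity k θ = chainDensity k 0 θ := by
  simp only [simplexDensity, chainDensity, cons_castSucc_eq_ite]

lemma measurable_chainDensity (k : ℕ) (x : ℝ) : Measurable (chainDensity k x) := by
  unfold chainDensity
  fun_prop

lemma chainDensity_nonneg {k : ℕ} {x b : ℝ} {θ : Fin k → ℝ} (hθ : θ ∈ chainsIn k x b) :
    0 ≤ chainDensity k x θ := by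
  have hcons : StrictMono (Fin.cons x θ : Fin (k + 1) → ℝ) :=
    Fin.strictMono_cons.2 ⟨hθ.2.1, hθ.1⟩
  refine Finset.prod_nonneg fun i _ => Real.rpow_nonneg ?_ _
  have := hcons (Fin.castSucc_lt_succ (i := i))
  rw [Fin.cons_succ] at this
  linarith

lemma lintegral_fin_succ_cons {α : Type*} [MeasureSpace α] [SigmaFinite (volume : Measure α)]
    {k : ℕ} {F : (Fin (k + 1) → α) → ℝ≥0∞} (hF : Measurable F) :
    ∫⁻ θ, F θ = ∫⁻ t, ∫⁻ u, F (Fin.cons t u) := by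
  have he := (volume_preserving_piFinSuccAbove (fun _ : Fin (k + 1) => α) 0).symm
  rw [← he.lintegral_comp hF, Measure.volume_eq_prod,
    lintegral_prod (fun p => F ((MeasurableEquiv.piFinSuccAbove (fun _ => α) 0).symm p))
      (hF.comp he.measurable).aemeasurable]
  simp [Fin.consEquiv]

def chainWeight (k : ℕ) (x : ℝ) (θ : Fin k → ℝ) : ℝ≥0∞ :=
  (chainsIn k x 1).indicator (fun θ => ENNReal.ofReal (chainDensity k x θ)) θ

lemma measurable_chainWeight (k : ℕ) (x : ℝ) : Measurable (chainWeight k x) :=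
  (measurable_chainDensity k x).ennreal_ofReal.indicator (measurableSet_chainsIn k x 1)

lemma chainWeight_cons (k : ℕ) (x t : ℝ) (u : Fin k → ℝ) :
    chainWeight (k + 1) x (Fin.cons t u) =
      (Set.Ioc x 1).indicator (fun t => ENNReal.ofReal ((t - x) ^ (-(1:ℝ)/2))) t *
        chainWeight k t u := by
  by_cases ht : t ∈ Set.Ioc x 1
  · by_cases hu : u ∈ chainsIn k t 1
    · simp only [chainWeight, Set.indicator_of_mem (cons_mem_chainsIn.2 ⟨ht, hu⟩),
        Set.indicator_of_mem ht, Set.indicator_of_mem hu, chainDensity_cons,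
        ENNReal.ofReal_mul (Real.rpow_nonneg (sub_nonneg.2 ht.1.le) _)]
    · simp [chainWeight, hu, cons_mem_chainsIn]
  · simp [chainWeight, ht, cons_mem_chainsIn]

lemma lintegral_chainWeight_succ (k : ℕ) (x : ℝ) :
    ∫⁻ θ, chainWeight (k + 1) x θ =
      ∫⁻ t in Set.Ioc x 1, ENNReal.ofReal ((t - x) ^ (-(1:ℝ)/2)) * ∫⁻ u, chainWeight k t u := by
  rw [lintegral_fin_succ_cons (measurable_chainWeight _ x), ← lintegral_indicator measurableSet_Ioc]
  refine lintegral_congr fun t => ?_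
  simp only [chainWeight_cons, lintegral_const_mul _ (measurable_chainWeight k t),
    Set.indicator_mul_left]

lemma ofReal_Qop {f : ℝ → ℝ} (hf : Antitone f) (hf0 : ∀ z, 0 ≤ f z) (x : ℝ) :
    ENNReal.ofReal (Qop f x) = ∫⁻ t in Set.Ioc x 1, ENNReal.ofReal ((t - x) ^ (-(1:ℝ)/2) * f t) := by
  have hmeas : Measurable fun y => ENNReal.ofReal (y ^ (-(1:ℝ)/2) * f (x + y)) := by
    have := hf.measurable
    fun_prop
  rw [Qop, ofReal_integral_eq_lintegral_ofReal (integrableOn_rpow_mul_comp_add hf hf0 x _)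
    (ae_nonneg_rpow_mul_comp_add hf0 x _),
    ← (measurePreserving_sub_right volume x).setLIntegral_comp_preimage measurableSet_Ioc hmeas,
    Set.preimage_sub_const_Ioc, zero_add, sub_add_cancel]
  simp only [add_sub_cancel]

lemma lintegral_chainWeight (k : ℕ) (x : ℝ) :
    ∫⁻ θ, chainWeight k x θ = ENNReal.ofReal (Qop^[k] (fun _ => 1) x) := by
  induction k generalizing x with
  | zero => simp [chainWeight, chainsIn, chainDensity, Subsingleton.strictMono, volume_pi]
  | succ k ih =>
    rw [lintegral_chainWeight_succ, Function.iterate_succ_apply',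
      ofReal_Qop (Qop_iterate_antitone k) (Qop_iterate_nonneg k)]
    refine setLIntegral_congr_fun measurableSet_Ioc fun t ht => ?_
    rw [ih, ENNReal.ofReal_mul (Real.rpow_nonneg (sub_nonneg.2 ht.1.le) _)]

lemma Jint_eq_Qop_iterate (k : ℕ) : Jint k = Qop^[k] (fun _ => 1) 0 := by
  have hJ : Jint k = ∫ θ in chainsIn k 0 1, chainDensity k 0 θ := by
    simp only [Jint, simplexDensity_eq_chainDensity]; rfl
  rw [hJ, integral_eq_lintegral_of_nonneg_ae
      ((ae_restrict_iff' (measurableSet_chainsIn k 0 1)).2 (.of_forall fun _ => chainDensity_nonneg))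
      (measurable_chainDensity k 0).aestronglyMeasurable,
    ← lintegral_indicator (measurableSet_chainsIn k 0 1)]
  exact (congrArg ENNReal.toReal (lintegral_chainWeight k 0)).trans
    (ENNReal.toReal_ofReal (Qop_iterate_nonneg k 0))

lemma ceilPart_natCast_div {n : ℕ} (hn : 0 < n) (t : ℕ) : ceilPart n ((t : ℝ) / n) = t / n := by
  rw [ceilPart, div_mul_cancel₀ _ (by positivity), Int.ceil_natCast, Int.cast_natCast]

lemma ceilPart_eq_of_mem_Ioc {n : ℕ} (hn : 0 < n) {i : ℕ} {y : ℝ}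
    (hy : y ∈ Set.Ioc ((i : ℝ) / n) ((i + 1) / n)) : ceilPart n y = (i + 1) / n := by
  have hn' : (0 : ℝ) < n := by exact_mod_cast hn
  have h1 := (div_lt_iff₀ hn').1 hy.1
  have h2 := (le_div_iff₀ hn').1 hy.2
  have hceil : ⌈y * n⌉ = (i + 1 : ℤ) := by
    rw [Int.ceil_eq_iff]
    push_cast
    constructor <;> linarith
  rw [ceilPart, hceil]
  push_cast
  ring

lemma integral_comp_ceilPart {n : ℕ} (hn : 0 < n) (F : ℝ → ℝ) (N : ℕ) :
    ∫ y in Set.Ioc 0 ((N : ℝ) / n), F (ceilPart n y) =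
      ∑ i ∈ Finset.range N, F ((i + 1) / n) / n := by
  have hcell : ∀ i : ℕ, ∀ y ∈ Set.uIoc ((i : ℝ) / n) ((i + 1 : ℕ) / n),
      F (ceilPart n y) = F ((i + 1) / n) := fun i y hy => by
    rw [Set.uIoc_of_le (by gcongr; simp), Nat.cast_succ] at hy
    rw [ceilPart_eq_of_mem_Ioc hn hy]
  have hint : ∀ i < N, IntervalIntegrable (fun y => F (ceilPart n y)) volume
      ((i : ℝ) / n) ((i + 1 : ℕ) / n) := fun i _ =>
    intervalIntegrable_const.congr_ae
      ((ae_restrict_iff' measurableSet_uIoc).2 (.of_forall fun y hy => (hcell i y hy).symm))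
  have hsum := intervalIntegral.sum_integral_adjacent_intervals (a := fun i : ℕ => (i : ℝ) / n) hint
  rw [Nat.cast_zero, zero_div] at hsum
  rw [← intervalIntegral.integral_of_le (by positivity), ← hsum]
  refine Finset.sum_congr rfl fun i _ => ?_
  rw [intervalIntegral.integral_congr_ae (.of_forall (hcell i)), intervalIntegral.integral_const,
    smul_eq_mul]
  push_cast
  ring

lemma Qnop_natCast_div {n : ℕ} (hn : 0 < n) (g : ℝ → ℝ) {t : ℕ} (ht : t ≤ n) :
    Qnop n g (t / n) = ∑ i ∈ Finset.range (n - t),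
      ((i + 1) / n : ℝ) ^ (-(1:ℝ)/2) * g (t / n + (i + 1) / n) / n := by
  have h1 : 1 - (t : ℝ) / n = ((n - t : ℕ) : ℝ) / n := by
    rw [Nat.cast_sub ht, sub_div, div_self (by positivity)]
  rw [Qnop, ceilPart_natCast_div hn, h1,
    integral_comp_ceilPart hn (fun z => z ^ (-(1:ℝ)/2) * g (t / n + z))]

open scoped Classical in
def gridChains (n k t : ℕ) : Finset (Fin k → ℕ) :=
  (Fintype.piFinset fun _ : Fin k => Finset.Ioc t n).filter StrictMono

lemma mem_gridChains {n k t : ℕ} {s : Fin k → ℕ} : s ∈ gridChains n k t ↔ s ∈ chainsIn k t n := by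
  simp only [gridChains, chainsIn, Finset.mem_filter, Fintype.mem_piFinset, Finset.mem_Ioc,
    forall_and, Set.mem_ofPred_eq]
  tauto

def gridChainSum (n k t : ℕ) : ℝ :=
  ∑ s ∈ gridChains n k t, chainDensity k (t / n) fun i => (s i : ℝ) / n

lemma gridChainSum_zero (n t : ℕ) : gridChainSum n 0 t = 1 := by
  simp [gridChainSum, gridChains, chainDensity, Subsingleton.strictMono]

lemma gridChainSum_succ (n k t : ℕ) :
    gridChainSum n (k + 1) t =
      ∑ m ∈ Finset.Ioc t n, ((m : ℝ) / n - t / n) ^ (-(1:ℝ)/2) * gridChainSum n k m := by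
  simp only [gridChainSum, Finset.mul_sum]
  rw [Finset.sum_sigma']
  refine Finset.sum_bij' (fun s _ => ⟨s 0, Fin.tail s⟩) (fun p _ => Fin.cons p.1 p.2)
    (fun s hs => ?_) (fun p hp => ?_) (fun s _ => Fin.cons_self_tail s) (fun p _ => by simp)
    (fun s _ => ?_)
  · rw [mem_gridChains, ← Fin.cons_self_tail s, cons_mem_chainsIn] at hs
    simpa [mem_gridChains] using hs
  · rw [Finset.mem_sigma, mem_gridChains] at hp
    rw [mem_gridChains, cons_mem_chainsIn]
    simpa using hp
  · conv_lhs => rw [← Fin.cons_self_tail s]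
    rw [← chainDensity_cons]
    congr 1
    ext i
    cases i using Fin.cases <;> simp

lemma Qnop_iterate_natCast_div {n : ℕ} (hn : 0 < n) (k : ℕ) {t : ℕ} (ht : t ≤ n) :
    (Qnop n)^[k] (fun _ => 1) (t / n) = ((n : ℝ) ^ k)⁻¹ * gridChainSum n k t := by
  induction k generalizing t with
  | zero => simp [gridChainSum_zero]
  | succ k ih =>
    rw [Function.iterate_succ_apply', Qnop_natCast_div hn _ ht, gridChainSum_succ,
      ← Finset.Ico_add_one_add_one_eq_Ioc, Finset.sum_Ico_eq_sum_range, Finset.mul_sum,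
      Nat.add_sub_add_right]
    refine Finset.sum_congr rfl fun i hi => ?_
    have hi : t + 1 + i ≤ n := by rw [Finset.mem_range] at hi; omega
    have hcast : (t : ℝ) / n + (i + 1) / n = ((t + 1 + i : ℕ) : ℝ) / n := by push_cast; ring
    have hgap : ((t + 1 + i : ℕ) : ℝ) / n - t / n = (i + 1) / n := by push_cast; ring
    rw [hcast, ih hi, hgap, pow_succ, mul_inv]
    ring

lemma Jsum_eq_gridChainSum (k n : ℕ) : Jsum k n = ((n : ℝ) ^ k)⁻¹ * gridChainSum n k 0 := by
  have hchains : (Fintype.piFinset fun _ : Fin k => Finset.Icc 1 n).filter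
      (fun s => ∀ i j : Fin k, i < j → s i < s j) = gridChains n k 0 := by
    rw [gridChains, ← Finset.Icc_add_one_left_eq_Ioc, zero_add]
    exact Finset.filter_congr fun s _ => ⟨fun h _ _ hij => h _ _ hij, fun h _ _ hij => h hij⟩
  have hJ : Jsum k n = ((n : ℝ) ^ k)⁻¹ *
      ∑ s ∈ gridChains n k 0, simplexDensity k fun i => (s i : ℝ) / n := by
    rw [← hchains]
    rfl
  simp [hJ, gridChainSum, simplexDensity_eq_chainDensity]

/-- Iterates of `Q_n` on the constant function `1` are dominated by those of `Q`,
and consequently the Riemann sums `J_{k,n}` are dominated by the simplex integrals `J_k`. -/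
theorem Qnop_iterate_le_Qop_iterate (n : ℕ) (hn : 0 < n) :
    (∀ (k : ℕ), ∀ x ∈ Set.Icc (0 : ℝ) 1,
      ((Qnop n)^[k] (fun _ => 1) x) ≤ (Qop^[k] (fun _ => 1) x)) ∧
    ∀ k : ℕ, Jsum k n ≤ Jint k := by
  refine ⟨fun k x hx => Qnop_iterate_le_Qop_iterate_of_nonneg hn k hx.1, fun k => ?_⟩
  have hgrid := Qnop_iterate_natCast_div hn k (Nat.zero_le n)
  rw [Nat.cast_zero, zero_div] at hgrid
  rw [Jsum_eq_gridChainSum, ← hgrid, Jint_eq_Qop_iterate]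
  exact Qnop_iterate_le_Qop_iterate_of_nonneg hn k le_rfl
end
end
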